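/- Let ∂ be a ℤ-linear map from chains on S to chains on T. Let B₁, …, Bₘ be chains on T with pairwise disjoint supports, each lying in the range of ∂, and let A = B₁ + ⋯ + Bₘ. Suppose that for every connected chain C on S with ‖C‖ ≤ FV(A), the support of ∂C meets the support of Bᵢ for at most one index i. Then FV(A) = FV(B₁) + ⋯ + FV(Bₘ). -/

import Mathlib

/-!
A minimal filling `C` of `A = ∑ Bᵢ` splits into connected components whose volumes add up to
`‖C‖ = FV(A)`. Each component therefore has volume at most `FV(A)`, and its boundary, a subchain
of `A`, lies in the support of a single `Bᵢ`. Grouping the components by that index gives chains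
whose boundaries have support in the pairwise disjoint supports of the `Bᵢ` and add up to `A`, so
they are fillings of the `Bᵢ`, with total volume at most `FV(A)`.
-/

/-- The volume of a chain `A : S →₀ ℤ`: the sum of the absolute values of its
coefficients. -/
def vol {S : Type*} (A : S →₀ ℤ) : ℕ := ∑ s ∈ A.support, (A s).natAbs

/-- `B` is a subchain of `A` when `‖A‖ = ‖B‖ + ‖A - B‖`. -/
def Subchain {S : Type*} (B A : S →₀ ℤ) : Prop := vol A = vol B + vol (A - B)

/-- Given a boundary map `d`, `B` is a component of `A` if `B` is a subchain of `A`
and `d B` is a subchain of `d A`. -/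
def Component {S T : Type*} (d : (S →₀ ℤ) →ₗ[ℤ] (T →₀ ℤ)) (B A : S →₀ ℤ) : Prop :=
  Subchain B A ∧ Subchain (d B) (d A)

/-- A chain is connected if its only components are `0` and itself. -/
def Connected {S T : Type*} (d : (S →₀ ℤ) →ₗ[ℤ] (T →₀ ℤ)) (A : S →₀ ℤ) : Prop :=
  ∀ B : S →₀ ℤ, Component d B A → B = 0 ∨ B = A

/-- The filling volume of a chain `A` on `T` (in the range of `d`): the least volume
of a chain `C` on `S` with `d C = A`. -/
noncomputable def FV {S T : Type*} (d : (S →₀ ℤ) →ₗ[ℤ] (T →₀ ℤ)) (A : T →₀ ℤ) : ℕ :=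
  sInf (vol '' {C : S →₀ ℤ | d C = A})

section Volume

variable {S : Type*}

lemma vol_eq_sum_of_support_subset (A : S →₀ ℤ) {u : Finset S} (h : A.support ⊆ u) :
    vol A = ∑ s ∈ u, (A s).natAbs :=
  Finset.sum_subset h fun s _ hs => by simp [Finsupp.notMem_support_iff.mp hs]

lemma vol_eq_zero {A : S →₀ ℤ} : vol A = 0 ↔ A = 0 := by
  simp [vol, Finset.sum_eq_zero_iff, Finsupp.ext_iff]

lemma vol_add_le (A B : S →₀ ℤ) : vol (A + B) ≤ vol A + vol B := by
  classical
  set u := A.support ∪ B.support ∪ (A + B).support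
  rw [vol_eq_sum_of_support_subset A (u := u) (by grind),
    vol_eq_sum_of_support_subset B (u := u) (by grind),
    vol_eq_sum_of_support_subset (A + B) (u := u) (by grind), ← Finset.sum_add_distrib]
  exact Finset.sum_le_sum fun s _ => Int.natAbs_add_le _ _

lemma vol_sum_le {ι : Type*} (s : Finset ι) (f : ι → S →₀ ℤ) :
    vol (∑ i ∈ s, f i) ≤ ∑ i ∈ s, vol (f i) :=
  Finset.le_sum_of_subadditive vol (vol_eq_zero.mpr rfl).le vol_add_le s f

lemma subchain_iff {B A : S →₀ ℤ} :
    Subchain B A ↔ ∀ s, (A s).natAbs = (B s).natAbs + (A s - B s).natAbs := by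
  classical
  set u := A.support ∪ B.support ∪ (A - B).support
  have hle : ∀ s, (A s).natAbs ≤ (B s).natAbs + (A s - B s).natAbs := fun s => by
    simpa using Int.natAbs_add_le (B s) (A s - B s)
  rw [Subchain, vol_eq_sum_of_support_subset A (u := u) (by grind),
    vol_eq_sum_of_support_subset B (u := u) (by grind),
    vol_eq_sum_of_support_subset (A - B) (u := u) (by grind), ← Finset.sum_add_distrib]
  simp only [Finsupp.sub_apply]
  rw [Finset.sum_eq_sum_iff_of_le fun s _ => hle s]
  refine ⟨fun h s => ?_, fun h s _ => h s⟩
  by_cases hs : s ∈ u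
  · exact h s hs
  · simp_all [u]

lemma Subchain.support_subset {B A : S →₀ ℤ} (h : Subchain B A) : B.support ⊆ A.support := by
  intro s hs
  have := subchain_iff.mp h s
  simp only [Finsupp.mem_support_iff] at hs ⊢
  grind

lemma Subchain.trans {B' B A : S →₀ ℤ} (h₁ : Subchain B' B) (h₂ : Subchain B A) :
    Subchain B' A := by
  rw [subchain_iff] at *
  intro s
  have h₁s := h₁ s
  have h₂s := h₂ s
  have hsub : (A s - B' s).natAbs ≤ (A s - B s).natAbs + (B s - B' s).natAbs := by
    simpa using Int.natAbs_add_le (A s - B s) (B s - B' s)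
  have hadd : (A s).natAbs ≤ (B' s).natAbs + (A s - B' s).natAbs := by
    simpa using Int.natAbs_add_le (B' s) (A s - B' s)
  omega

lemma Subchain.sub {B A : S →₀ ℤ} (h : Subchain B A) : Subchain (A - B) A := by
  rw [Subchain, sub_sub_cancel, add_comm]
  exact h

end Volume

section Components

variable {S T : Type*} {d : (S →₀ ℤ) →ₗ[ℤ] (T →₀ ℤ)}

lemma Component.refl (d : (S →₀ ℤ) →ₗ[ℤ] (T →₀ ℤ)) (A : S →₀ ℤ) : Component d A A :=
  ⟨subchain_iff.mpr fun _ => by simp, subchain_iff.mpr fun _ => by simp⟩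

lemma Component.trans {B' B A : S →₀ ℤ} (h₁ : Component d B' B) (h₂ : Component d B A) :
    Component d B' A :=
  ⟨h₁.1.trans h₂.1, h₁.2.trans h₂.2⟩

lemma Component.sub {B A : S →₀ ℤ} (h : Component d B A) : Component d (A - B) A :=
  ⟨h.1.sub, map_sub d A B ▸ h.2.sub⟩

theorem exists_connected_decomposition (d : (S →₀ ℤ) →ₗ[ℤ] (T →₀ ℤ)) (C : S →₀ ℤ) :
    ∃ (n : ℕ) (f : Fin n → S →₀ ℤ), (∀ k, Connected d (f k) ∧ Component d (f k) C) ∧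
      ∑ k, f k = C ∧ ∑ k, vol (f k) = vol C := by
  induction hC : vol C using Nat.strong_induction_on generalizing C with
  | _ N ih =>
    by_cases hconn : Connected d C
    · exact ⟨1, fun _ => C, fun _ => ⟨hconn, Component.refl d C⟩, by simp, by simp [hC]⟩
    obtain ⟨D, hD, hD0, hDC⟩ : ∃ D, Component d D C ∧ D ≠ 0 ∧ D ≠ C := by
      simpa [Connected] using hconn
    have hvol : vol C = vol D + vol (C - D) := hD.1
    have hD_ne : vol D ≠ 0 := mt vol_eq_zero.mp hD0
    have hCD_ne : vol (C - D) ≠ 0 := mt vol_eq_zero.mp (sub_ne_zero.mpr hDC.symm)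
    obtain ⟨n₁, f₁, hf₁, hsum₁, hvol₁⟩ := ih _ (by omega) D rfl
    obtain ⟨n₂, f₂, hf₂, hsum₂, hvol₂⟩ := ih _ (by omega) (C - D) rfl
    refine ⟨n₁ + n₂, Fin.append f₁ f₂, fun k => ?_, ?_, ?_⟩
    · refine Fin.addCases (fun k => ?_) (fun k => ?_) k
      · simpa using And.intro (hf₁ k).1 ((hf₁ k).2.trans hD)
      · simpa using And.intro (hf₂ k).1 ((hf₂ k).2.trans hD.sub)
    · simp [Fin.sum_univ_add, hsum₁, hsum₂]
    · simp only [Fin.sum_univ_add, Fin.append_left, Fin.append_right, hvol₁, hvol₂]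
      omega

end Components

section Supports

variable {ι α M : Type*} [Fintype ι] [AddCommMonoid M]

lemma eq_of_sum_eq_of_support_subset {x y : ι → α →₀ M}
    (hy : Pairwise fun i j => Disjoint (y i).support (y j).support)
    (hxy : ∀ i, (x i).support ⊆ (y i).support) (hsum : ∑ i, x i = ∑ i, y i) (i : ι) :
    x i = y i := by
  ext t
  by_cases ht : t ∈ (y i).support
  · have hy_other : ∀ j ≠ i, y j t = 0 := fun j hj =>
      Finsupp.notMem_support_iff.mp (Finset.disjoint_right.mp (hy hj) ht)
    have hx_other : ∀ j ≠ i, x j t = 0 := fun j hj =>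
      Finsupp.notMem_support_iff.mp fun hx => (Finsupp.mem_support_iff.mp (hxy j hx)) (hy_other j hj)
    have := congr($hsum t)
    rwa [Finsupp.finsetSum_apply, Finsupp.finsetSum_apply,
      Finset.sum_eq_single i (fun j _ => hx_other j) (by simp),
      Finset.sum_eq_single i (fun j _ => hy_other j) (by simp)] at this
  · rw [Finsupp.notMem_support_iff.mp ht, Finsupp.notMem_support_iff.mp (mt (hxy i ·) ht)]

lemma exists_support_subset_of_subsingleton [Nonempty ι] [DecidableEq α] {x : α →₀ M}
    {y : ι → α →₀ M} (hx : x.support ⊆ (∑ i, y i).support)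
    (h : {i | (x.support ∩ (y i).support).Nonempty}.Subsingleton) :
    ∃ i, x.support ⊆ (y i).support := by
  rcases x.support.eq_empty_or_nonempty with h0 | ⟨t, ht⟩
  · exact ⟨Classical.arbitrary ι, by simp [h0]⟩
  obtain ⟨i, -, hi⟩ := Finsupp.mem_support_finsetSum t (hx ht)
  refine ⟨i, fun t' ht' => ?_⟩
  obtain ⟨j, -, hj⟩ := Finsupp.mem_support_finsetSum t' (hx ht')
  have hji : j = i := h ⟨t', Finset.mem_inter.mpr ⟨ht', hj⟩⟩ ⟨t, Finset.mem_inter.mpr ⟨ht, hi⟩⟩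
  exact hji ▸ hj

end Supports

section FillingVolume

variable {S T : Type*} {d : (S →₀ ℤ) →ₗ[ℤ] (T →₀ ℤ)}

lemma FV_le {A : T →₀ ℤ} {C : S →₀ ℤ} (h : d C = A) : FV d A ≤ vol C :=
  Nat.sInf_le ⟨C, h, rfl⟩

lemma exists_vol_eq_FV {A : T →₀ ℤ} (h : A ∈ Set.range d) : ∃ C, d C = A ∧ vol C = FV d A := by
  obtain ⟨C, hC⟩ := h
  have : (vol '' {C' : S →₀ ℤ | d C' = A}).Nonempty := ⟨vol C, C, hC, rfl⟩
  exact Nat.sInf_mem this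

lemma FV_sum_le {ι : Type*} [Fintype ι] {B : ι → T →₀ ℤ} (h : ∀ i, B i ∈ Set.range d) :
    FV d (∑ i, B i) ≤ ∑ i, FV d (B i) := by
  choose C hC hvol using fun i => exists_vol_eq_FV (h i)
  calc FV d (∑ i, B i) ≤ vol (∑ i, C i) := FV_le (by simp [map_sum, hC])
    _ ≤ ∑ i, vol (C i) := vol_sum_le _ _
    _ = ∑ i, FV d (B i) := by simp [hvol]

theorem sum_FV_le_of_boundary_support_subset {ι κ : Type*} [Fintype ι] [Fintype κ]
    {B : ι → T →₀ ℤ} (hdisj : Pairwise fun i j => Disjoint (B i).support (B j).support)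
    (f : κ → S →₀ ℤ) (idx : κ → ι) (hidx : ∀ k, (d (f k)).support ⊆ (B (idx k)).support)
    (hsum : d (∑ k, f k) = ∑ i, B i) : ∑ i, FV d (B i) ≤ ∑ k, vol (f k) := by
  classical
  set g : ι → S →₀ ℤ := fun i => ∑ k with idx k = i, f k
  have hg_support : ∀ i, (d (g i)).support ⊆ (B i).support := by
    intro i t ht
    rw [map_sum] at ht
    obtain ⟨k, hk, htk⟩ := Finsupp.mem_support_finsetSum t ht
    exact (Finset.mem_filter.mp hk).2 ▸ hidx k htk
  have hg_sum : ∑ i, g i = ∑ k, f k := Finset.sum_fiberwise _ _ _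
  have hg : ∀ i, d (g i) = B i :=
    eq_of_sum_eq_of_support_subset hdisj hg_support (by rw [← map_sum, hg_sum, hsum])
  calc ∑ i, FV d (B i) ≤ ∑ i, vol (g i) := Finset.sum_le_sum fun i _ => FV_le (hg i)
    _ ≤ ∑ i, ∑ k with idx k = i, vol (f k) := Finset.sum_le_sum fun i _ => vol_sum_le _ _
    _ = ∑ k, vol (f k) := Finset.sum_fiberwise _ _ _

end FillingVolume

/-- If the fillable chains `B₁, …, Bₘ` have pairwise disjoint supports and are so far
apart that no small connected chain on `S` has boundary meeting the supports of two
of them, then the filling volume of their sum is the sum of their filling volumes. -/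
theorem FV_sum_of_separated {S T : Type*} [DecidableEq T] (d : (S →₀ ℤ) →ₗ[ℤ] (T →₀ ℤ))
    (m : ℕ) (B : Fin m → (T →₀ ℤ))
    (hdisj : ∀ i j : Fin m, i ≠ j → Disjoint (B i).support (B j).support)
    (hrange : ∀ i, B i ∈ Set.range d)
    (hsep : ∀ C : S →₀ ℤ, Connected d C → vol C ≤ FV d (∑ i, B i) →
      {i : Fin m | ((d C).support ∩ (B i).support).Nonempty}.Subsingleton) :
    FV d (∑ i, B i) = ∑ i, FV d (B i) := by
  refine le_antisymm (FV_sum_le hrange) ?_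
  rcases isEmpty_or_nonempty (Fin m) with hm | hm
  · simp
  obtain ⟨C, hC, hvolC⟩ :=
    exists_vol_eq_FV (Submodule.sum_mem (LinearMap.range d) fun i _ => hrange i)
  obtain ⟨n, f, hf, hsumf, hvolf⟩ := exists_connected_decomposition d C
  have hsmall : ∀ k, vol (f k) ≤ FV d (∑ i, B i) := fun k =>
    hvolC ▸ hvolf ▸ Finset.single_le_sum (f := fun k => vol (f k)) (fun _ _ => Nat.zero_le _) (Finset.mem_univ k)
  have hsingle : ∀ k, ∃ i, (d (f k)).support ⊆ (B i).support := fun k =>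
    exists_support_subset_of_subsingleton (hC ▸ (hf k).2.2.support_subset)
      (hsep _ (hf k).1 (hsmall k))
  choose idx hidx using hsingle
  calc ∑ i, FV d (B i) ≤ ∑ k, vol (f k) :=
        sum_FV_le_of_boundary_support_subset (fun i j => hdisj i j) f idx hidx (by rw [hsumf, hC])
    _ = FV d (∑ i, B i) := by rw [hvolf, hvolC]
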